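/- arXiv:2012.02060 — 2 statements merged into one kernel-verified Lean document; each statement's English description precedes it below -/
import Mathlib

section
/- The multisimplicial Alexander–Whitney map is coassociative: (AW ⊗ id) ∘ AW = (id ⊗ AW) ∘ AW as maps C_*(X) → C_*(X) ⊗ C_*(X) ⊗ C_*(X). -/
open DirectSum
open scoped TensorProduct

noncomputable section

/-- A `k`-fold multisimplicial set: a contravariant functor from `Δ^k` to sets,
given on objects `v : Fin k → ℕ` and on morphisms, which are families of
monotone maps `Fin (v l + 1) →o Fin (w l + 1)`. -/
structure MSSet (k : ℕ) where
  X : (Fin k → ℕ) → Type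
  map : ∀ {v w : Fin k → ℕ}, (∀ l, Fin (v l + 1) →o Fin (w l + 1)) → X w → X v
  map_id : ∀ (v) (x : X v), map (v := v) (w := v) (fun _ => OrderHom.id) x = x
  map_comp : ∀ {u v w : Fin k → ℕ}
    (f : ∀ l, Fin (u l + 1) →o Fin (v l + 1)) (g : ∀ l, Fin (v l + 1) →o Fin (w l + 1))
    (x : X w), map (fun l => (g l).comp (f l)) x = map f (map g x)

variable {R : Type} [CommRing R] {k : ℕ}

/-- The monotone cast between `Fin`s of equal size. -/
def castOH {m n : ℕ} (h : m = n) : Fin m →o Fin n :=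
  ⟨Fin.cast h, fun _ _ hab => hab⟩

/-- The coface map `δ_t : [n] → [n+1]` (the monotone injection skipping `t`). -/
def δmap (n : ℕ) (t : Fin (n + 2)) : Fin (n + 1) →o Fin (n + 2) :=
  ⟨fun x => ⟨if (x : ℕ) < t then x else x + 1, by split <;> omega⟩, by
    intro a b h
    simp only [Fin.mk_le_mk]
    have h' : (a : ℕ) ≤ b := h
    split <;> split <;> omega⟩

/-- The codegeneracy map `σ_t : [n+1] → [n]` (the monotone surjection hitting `t` twice). -/
def σmap (n : ℕ) (t : Fin (n + 1)) : Fin (n + 2) →o Fin (n + 1) :=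
  ⟨fun x => ⟨if (x : ℕ) ≤ t then x else x - 1, by have := t.isLt; split <;> omega⟩, by
    intro a b h
    simp only [Fin.mk_le_mk]
    have h' : (a : ℕ) ≤ b := h
    split <;> split <;> omega⟩

/-- The family of monotone maps realizing the `t`-th coface in direction `j`:
a morphism from `v` to `Function.update v j (v j + 1)` in `Δ^k`. -/
def faceFam (v : Fin k → ℕ) (j : Fin k) (t : Fin (v j + 2)) :
    ∀ l, Fin (v l + 1) →o Fin (Function.update v j (v j + 1) l + 1) := fun l =>
  if h : l = j then by
    subst h
    exact (castOH (by rw [Function.update_self])).comp (δmap (v l) t)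
  else castOH (by rw [Function.update_of_ne h])

/-- The family of monotone maps realizing the `t`-th codegeneracy in direction `j`:
a morphism from `Function.update v j (v j + 1)` to `v` in `Δ^k`. -/
def degenFam (v : Fin k → ℕ) (j : Fin k) (t : Fin (v j + 1)) :
    ∀ l, Fin (Function.update v j (v j + 1) l + 1) →o Fin (v l + 1) := fun l =>
  if h : l = j then by
    subst h
    exact (σmap (v l) t).comp (castOH (by rw [Function.update_self]))
  else castOH (by rw [Function.update_of_ne h])

/-- `v` with the `j`-th entry decreased by one. -/
def predIdx (v : Fin k → ℕ) (j : Fin k) : Fin k → ℕ := Function.update v j (v j - 1)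

lemma predIdx_spec (v : Fin k → ℕ) (j : Fin k) (h : v j ≠ 0) :
    Function.update (predIdx v j) j (predIdx v j j + 1) = v := by
  funext m
  by_cases hm : m = j
  · subst hm; simp [predIdx]; omega
  · simp [predIdx, Function.update_of_ne hm]

/-- The sign `(-1)^(t + v 0 + ... + v (j-1))`. -/
def dsign (v : Fin k → ℕ) (j : Fin k) (t : ℕ) : ℤ :=
  (-1) ^ (t + ∑ m ∈ Finset.univ.filter (fun m => m < j), v m)

/-- Lattice paths from the origin to `v`, encoding `(v 0, ..., v (k-1))`-shuffles:
the function records the direction of each of the `∑ v l` unit moves. -/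
def Paths (v : Fin k → ℕ) : Type :=
  {c : Fin (∑ l, v l) → Fin k // ∀ l, (Finset.univ.filter (fun i => c i = l)).card = v l}

instance (v : Fin k → ℕ) : Fintype (Paths v) := by unfold Paths; infer_instance

/-- The sign of the shuffle associated to a lattice path: `(-1)^{number of inversions}`. -/
def pathSign {v : Fin k → ℕ} (c : Paths v) : ℤ :=
  (-1) ^ (Finset.univ.filter
    (fun p : Fin (∑ l, v l) × Fin (∑ l, v l) => p.1 < p.2 ∧ c.1 p.2 < c.1 p.1)).card

/-- The family of monotone maps `π_l : [∑ v] → [v l]` associated to a lattice path: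
`π_l (j)` counts the moves in direction `l` among the first `j` moves. -/
def pathFam (v : Fin k → ℕ) (c : Paths v) (l : Fin k) :
    Fin ((∑ m, v m) + 1) →o Fin (v l + 1) :=
  ⟨fun j => ⟨(Finset.univ.filter (fun i : Fin (∑ m, v m) => (i : ℕ) < (j : ℕ) ∧ c.1 i = l)).card, by
      have hle : (Finset.univ.filter (fun i : Fin (∑ m, v m) => (i : ℕ) < (j : ℕ) ∧ c.1 i = l)).card ≤
          (Finset.univ.filter (fun i => c.1 i = l)).card := by
        apply Finset.card_le_card
        intro x hx
        simp only [Finset.mem_filter, Finset.mem_univ, true_and] at hx ⊢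
        exact hx.2
      have := c.2 l
      omega⟩, by
    intro a b hab
    simp only [Fin.mk_le_mk]
    apply Finset.card_le_card
    intro x hx
    simp only [Finset.mem_filter, Finset.mem_univ, true_and] at hx ⊢
    have h' : (a : ℕ) ≤ b := hab
    exact ⟨by omega, hx.2⟩⟩


namespace MSSet

variable (K : MSSet k)

/-- Cast of multisimplices along an equality of multidegrees. -/
def cmap {v w : Fin k → ℕ} (h : v = w) : K.X w → K.X v :=
  K.map fun l => castOH (by rw [h])

variable (R) in
/-- The chain complex `C_*(K; R) = ⊕_v R⟨K_v⟩` of a multisimplicial set. -/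
abbrev ch := ⨁ v : (Fin k → ℕ), (K.X v →₀ R)

variable (R) in
/-- The generator of `C_*(K; R)` corresponding to a multisimplex. -/
def gen (v : Fin k → ℕ) (x : K.X v) : K.ch R :=
  DirectSum.lof R _ (fun v => K.X v →₀ R) v (Finsupp.single x 1)

variable (R) in
/-- The multisimplicial differential on `C_*(K; R)`. -/
def del : K.ch R →ₗ[R] K.ch R :=
  DirectSum.toModule R _ (K.ch R) fun v =>
    ∑ j : Fin k,
      if h : v j = 0 then 0
      else
        ∑ t : Fin (v j + 1),
          dsign v j t •
            ((DirectSum.lof R _ (fun v => K.X v →₀ R) (predIdx v j)) ∘ₗ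
              Finsupp.lmapDomain R R (fun x =>
                K.map (faceFam (predIdx v j) j
                    (Fin.cast (by rw [predIdx, Function.update_self]; omega) t))
                  (K.cmap (predIdx_spec v j h) x)))

variable (R) in
/-- The Koszul grading involution `x ↦ (-1)^{|x|} x`. -/
def koszul : K.ch R →ₗ[R] K.ch R :=
  DirectSum.toModule R _ (K.ch R) fun v =>
    ((-1 : ℤ) ^ (∑ l, v l)) • DirectSum.lof R _ (fun v => K.X v →₀ R) v

variable (R) in
/-- The differential on `C_*(K) ⊗ C_*(K)`, with Koszul signs. -/
def delT : (K.ch R ⊗[R] K.ch R) →ₗ[R] (K.ch R ⊗[R] K.ch R) :=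
  TensorProduct.map (K.del R) LinearMap.id + TensorProduct.map (K.koszul R) (K.del R)

end MSSet

/-- The front face inclusion `(F_{i_1}, ..., F_{i_k})`, `F_i(l) = l`. -/
def frontFam {v : Fin k → ℕ} (i : ∀ l, Fin (v l + 1)) :
    ∀ l, Fin ((i l : ℕ) + 1) →o Fin (v l + 1) := fun l =>
  ⟨fun m => ⟨(m : ℕ), by have h1 := m.isLt; have h2 := (i l).isLt; omega⟩,
    fun a b h => h⟩

/-- The back face inclusion `(B_{a_1-i_1}, ..., B_{a_k-i_k})`, `B_j(l) = l + a - j`. -/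
def backFam {v : Fin k → ℕ} (i : ∀ l, Fin (v l + 1)) :
    ∀ l, Fin ((v l - (i l : ℕ)) + 1) →o Fin (v l + 1) := fun l =>
  ⟨fun m => ⟨(m : ℕ) + (i l : ℕ), by have h1 := m.isLt; have h2 := (i l).isLt; omega⟩,
    fun a b h => Nat.add_le_add_right h _⟩

/-- The Alexander–Whitney sign `(-1)^{Σ_{l<h} i_h (a_l - i_l)}`. -/
def awSign (v : Fin k → ℕ) (i : ∀ l, Fin (v l + 1)) : ℤ :=
  (-1) ^ (∑ p ∈ Finset.univ.filter (fun p : Fin k × Fin k => p.1 < p.2),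
    (i p.2 : ℕ) * (v p.1 - (i p.1 : ℕ)))

namespace MSSet

variable (K : MSSet k)

variable (R) in
/-- The multisimplicial Alexander–Whitney map
`AW(x) = Σ_i (-1)^{Σ_{l<h} i_h (a_l - i_l)} x⌋_{(i₁,...,i_k)} ⊗ _{(a-i)}⌊x`. -/
def AWm : K.ch R →ₗ[R] (K.ch R ⊗[R] K.ch R) :=
  DirectSum.toModule R _ _ fun v =>
    Finsupp.linearCombination R fun x =>
      ∑ i : ∀ l, Fin (v l + 1),
        awSign v i •
          (K.gen R (fun l => (i l : ℕ)) (K.map (frontFam i) x) ⊗ₜ[R]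
            K.gen R (fun l => v l - (i l : ℕ)) (K.map (backFam i) x))

variable (R) in
/-- The chain complex of the diagonal simplicial set `K^D`. -/
abbrev chD := ⨁ n : ℕ, (K.X (fun _ => n) →₀ R)

variable (R) in
/-- The generator of `C_*(K^D; R)` corresponding to a diagonal simplex. -/
def genD (n : ℕ) (x : K.X (fun _ => n)) : K.chD R :=
  DirectSum.lof R ℕ (fun n => K.X (fun _ => n) →₀ R) n (Finsupp.single x 1)

variable (R) in
/-- The simplicial differential on `C_*(K^D; R)`. -/
def delD : K.chD R →ₗ[R] K.chD R :=
  DirectSum.toModule R _ (K.chD R) fun n =>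
    match n with
    | 0 => 0
    | m + 1 =>
      ∑ t : Fin (m + 2),
        ((-1 : ℤ) ^ (t : ℕ)) •
          ((DirectSum.lof R ℕ (fun n => K.X (fun _ => n) →₀ R) m) ∘ₗ
            Finsupp.lmapDomain R R (fun x => K.map (fun _ => δmap m t) x))

variable (R) in
/-- The Eilenberg–Zilber map `C_*(K; R) → C_*(K^D; R)` as a sum over shuffles
(lattice paths) with signs. -/
def EZ : K.ch R →ₗ[R] K.chD R :=
  DirectSum.toModule R _ (K.chD R) fun v =>
    ∑ c : Paths v,
      pathSign c •
        ((DirectSum.lof R ℕ (fun n => K.X (fun _ => n) →₀ R) (∑ l, v l)) ∘ₗ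
          Finsupp.lmapDomain R R (fun x => K.map (fun l => pathFam v c l) x))

variable (R) in
/-- The classical (simplicial) Alexander–Whitney map on the diagonal,
`AW(y) = Σ_{i=0}^n y⌋_i ⊗ _{n-i}⌊y`. -/
def AWD : K.chD R →ₗ[R] (K.chD R ⊗[R] K.chD R) :=
  DirectSum.toModule R _ _ fun n =>
    Finsupp.linearCombination R fun x =>
      ∑ i : Fin (n + 1),
        (K.genD R (i : ℕ)
            (K.map (fun _ => (⟨fun m => ⟨(m : ℕ), by have := m.isLt; have := i.isLt; omega⟩,
              fun a b h => h⟩ : Fin ((i : ℕ) + 1) →o Fin (n + 1))) x) ⊗ₜ[R]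
          K.genD R (n - (i : ℕ))
            (K.map (fun _ => (⟨fun m => ⟨(m : ℕ) + (i : ℕ), by have := m.isLt; omega⟩,
              fun a b h => Nat.add_le_add_right h _⟩ : Fin ((n - (i : ℕ)) + 1) →o Fin (n + 1))) x))

end MSSet

/-! Both sides of the identity, evaluated on a multisimplex `x` of multidegree `a`, are double
sums, and they match under the reindexing `(i, j) ↦ (j, i - j)` for `j ≤ i ≤ a`: the front
`j`-face of the front `i`-face of `x` is its front `j`-face, the back face of that front face is
the front `(i - j)`-face of the back face `_{a - j}⌊x`, and `_{a - i}⌊x` is the back face of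
`_{a - j}⌊x`. The signs match because for every pair of coordinates `l < h`,
`i_h (a_l - i_l) + j_h (i_l - j_l) = j_h (a_l - j_l) + (i_h - j_h) (a_l - i_l)`. -/

lemma sigma_pi_fin_ext {v : Fin k → ℕ} {w : (∀ l, Fin (v l + 1)) → Fin k → ℕ}
    {p q : Σ a : ∀ l, Fin (v l + 1), ∀ l, Fin (w a l + 1)}
    (h₁ : ∀ l, (p.1 l : ℕ) = q.1 l) (h₂ : ∀ l, (p.2 l : ℕ) = q.2 l) : p = q := by
  obtain ⟨a, b⟩ := p
  obtain ⟨c, d⟩ := q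
  obtain rfl : a = c := funext fun l => Fin.ext (h₁ l)
  obtain rfl : b = d := funext fun l => Fin.ext (h₂ l)
  rfl

def awSplitEquiv (v : Fin k → ℕ) :
    (Σ i : ∀ l, Fin (v l + 1), ∀ l, Fin ((i l : ℕ) + 1)) ≃
      (Σ a : ∀ l, Fin (v l + 1), ∀ l, Fin (v l - (a l : ℕ) + 1)) where
  toFun p := ⟨fun l => ⟨p.2 l, by have := (p.2 l).isLt; have := (p.1 l).isLt; omega⟩,
    fun l => (⟨p.1 l - p.2 l, by have := (p.1 l).isLt; have := (p.2 l).isLt; omega⟩ :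
      Fin (v l - p.2 l + 1))⟩
  invFun p := ⟨fun l => ⟨p.1 l + p.2 l, by have := (p.1 l).isLt; have := (p.2 l).isLt; omega⟩,
    fun l => (⟨p.1 l, by omega⟩ : Fin (p.1 l + p.2 l + 1))⟩
  left_inv := fun ⟨i, j⟩ => sigma_pi_fin_ext (w := fun i l => (i l : ℕ))
    (fun l => show (j l : ℕ) + (i l - j l) = i l by have := (j l).isLt; omega) (fun _ => rfl)
  right_inv := fun ⟨a, b⟩ => sigma_pi_fin_ext (w := fun a l => v l - (a l : ℕ))
    (fun _ => rfl) (fun l => show (a l : ℕ) + b l - a l = b l by omega)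

lemma awSign_mul_awSign_split (v : Fin k → ℕ) (i : ∀ l, Fin (v l + 1))
    (j : ∀ l, Fin ((i l : ℕ) + 1)) :
    awSign v i * awSign (fun l => (i l : ℕ)) j =
      awSign v (awSplitEquiv v ⟨i, j⟩).1 *
        awSign (fun l => v l - ((awSplitEquiv v ⟨i, j⟩).1 l : ℕ)) (awSplitEquiv v ⟨i, j⟩).2 := by
  simp only [awSign, ← pow_add, ← Finset.sum_add_distrib]
  congr 1
  refine Finset.sum_congr rfl fun p _ => ?_
  have := (j p.1).isLt; have := (i p.1).isLt; have := (j p.2).isLt; have := (i p.2).isLt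
  change (i p.2 : ℕ) * (v p.1 - i p.1) + (j p.2 : ℕ) * (i p.1 - j p.1) =
    (j p.2 : ℕ) * (v p.1 - j p.1) + (i p.2 - j p.2) * ((v p.1 - j p.1) - (i p.1 - j p.1))
  zify [show (j p.1 : ℕ) ≤ i p.1 by omega, show (i p.1 : ℕ) ≤ v p.1 by omega,
    show (j p.2 : ℕ) ≤ i p.2 by omega, show (i p.2 : ℕ) ≤ v p.2 by omega,
    show (j p.1 : ℕ) ≤ v p.1 by omega, show (i p.1 : ℕ) - j p.1 ≤ v p.1 - j p.1 by omega]
  ring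

namespace MSSet

variable (K : MSSet k)

lemma gen_map_congr {v w₁ w₂ : Fin k → ℕ} (h : w₁ = w₂)
    (f₁ : ∀ l, Fin (w₁ l + 1) →o Fin (v l + 1)) (f₂ : ∀ l, Fin (w₂ l + 1) →o Fin (v l + 1))
    (hf : ∀ l (m : ℕ) (h₁ : m < w₁ l + 1) (h₂ : m < w₂ l + 1),
      (f₁ l ⟨m, h₁⟩ : ℕ) = f₂ l ⟨m, h₂⟩)
    (x : K.X v) :
    K.gen R w₁ (K.map f₁ x) = K.gen R w₂ (K.map f₂ x) := by
  subst h
  congr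
  funext l
  ext m
  exact hf l m m.isLt m.isLt

section Faces

variable {v : Fin k → ℕ} {i : ∀ l, Fin (v l + 1)} {j : ∀ l, Fin ((i l : ℕ) + 1)}
  {a : ∀ l, Fin (v l + 1)} {b : ∀ l, Fin (v l - (a l : ℕ) + 1)}

lemma gen_front_front (ha : ∀ l, (a l : ℕ) = j l) (x : K.X v) :
    K.gen R (fun l => (j l : ℕ)) (K.map (frontFam j) (K.map (frontFam i) x)) =
      K.gen R (fun l => (a l : ℕ)) (K.map (frontFam a) x) := by
  rw [← K.map_comp]
  exact K.gen_map_congr (funext ha).symm _ _ (fun _ _ _ _ => rfl) x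

lemma gen_back_front (ha : ∀ l, (a l : ℕ) = j l) (hb : ∀ l, (b l : ℕ) = i l - j l)
    (x : K.X v) :
    K.gen R (fun l => (i l : ℕ) - j l) (K.map (backFam j) (K.map (frontFam i) x)) =
      K.gen R (fun l => (b l : ℕ)) (K.map (frontFam b) (K.map (backFam a) x)) := by
  rw [← K.map_comp, ← K.map_comp]
  refine K.gen_map_congr (funext hb).symm _ _ (fun l m _ _ => ?_) x
  change m + (j l : ℕ) = m + a l
  rw [ha]

lemma gen_back_back (ha : ∀ l, (a l : ℕ) = j l) (hb : ∀ l, (b l : ℕ) = i l - j l)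
    (x : K.X v) :
    K.gen R (fun l => v l - i l) (K.map (backFam i) x) =
      K.gen R (fun l => v l - a l - b l) (K.map (backFam b) (K.map (backFam a) x)) := by
  rw [← K.map_comp]
  refine K.gen_map_congr (funext fun l => ?_) _ _ (fun l m _ _ => ?_) x
  · have := (j l).isLt; have := (i l).isLt; have := ha l; have := hb l; omega
  · change m + (i l : ℕ) = m + b l + a l
    have := (j l).isLt; have := ha l; have := hb l; omega

end Faces

lemma AWm_gen (v : Fin k → ℕ) (x : K.X v) :
    K.AWm R (K.gen R v x) =
      ∑ i : ∀ l, Fin (v l + 1),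
        awSign v i •
          (K.gen R (fun l => (i l : ℕ)) (K.map (frontFam i) x) ⊗ₜ[R]
            K.gen R (fun l => v l - (i l : ℕ)) (K.map (backFam i) x)) := by
  rw [AWm, gen, DirectSum.toModule_lof, Finsupp.linearCombination_single, one_smul]

lemma assoc_map_AWm_id_AWm_gen (v : Fin k → ℕ) (x : K.X v) :
    (TensorProduct.assoc R (K.ch R) (K.ch R) (K.ch R)).toLinearMap
        (TensorProduct.map (K.AWm R) LinearMap.id (K.AWm R (K.gen R v x))) =
      ∑ p : Σ i : ∀ l, Fin (v l + 1), ∀ l, Fin ((i l : ℕ) + 1),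
        (awSign v p.1 * awSign (fun l => (p.1 l : ℕ)) p.2) •
          (K.gen R _ (K.map (frontFam p.2) (K.map (frontFam p.1) x)) ⊗ₜ[R]
            (K.gen R _ (K.map (backFam p.2) (K.map (frontFam p.1) x)) ⊗ₜ[R]
              K.gen R _ (K.map (backFam p.1) x))) := by
  simp only [AWm_gen, map_sum, LinearMap.map_smul_of_tower, TensorProduct.map_tmul,
    LinearMap.id_apply, TensorProduct.sum_tmul, ← TensorProduct.smul_tmul',
    Finset.smul_sum, smul_smul, LinearEquiv.coe_coe, TensorProduct.assoc_tmul]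
  rw [← Finset.univ_sigma_univ, Finset.sum_sigma]

lemma map_id_AWm_AWm_gen (v : Fin k → ℕ) (x : K.X v) :
    TensorProduct.map LinearMap.id (K.AWm R) (K.AWm R (K.gen R v x)) =
      ∑ p : Σ a : ∀ l, Fin (v l + 1), ∀ l, Fin (v l - (a l : ℕ) + 1),
        (awSign v p.1 * awSign (fun l => v l - (p.1 l : ℕ)) p.2) •
          (K.gen R _ (K.map (frontFam p.1) x) ⊗ₜ[R]
            (K.gen R _ (K.map (frontFam p.2) (K.map (backFam p.1) x)) ⊗ₜ[R]
              K.gen R _ (K.map (backFam p.2) (K.map (backFam p.1) x)))) := by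
  simp only [AWm_gen, map_sum, LinearMap.map_smul_of_tower, TensorProduct.map_tmul,
    LinearMap.id_apply, TensorProduct.tmul_sum, TensorProduct.tmul_smul,
    Finset.smul_sum, smul_smul]
  rw [← Finset.univ_sigma_univ, Finset.sum_sigma]

end MSSet

/-- The multisimplicial Alexander–Whitney map is coassociative:
`(AW ⊗ id) ∘ AW = (id ⊗ AW) ∘ AW` (up to the associator of the tensor product). -/
theorem AWm_coassoc (K : MSSet k) :
    (TensorProduct.assoc R (K.ch R) (K.ch R) (K.ch R)).toLinearMap ∘ₗ
        (TensorProduct.map (K.AWm R) LinearMap.id) ∘ₗ K.AWm R =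
      (TensorProduct.map LinearMap.id (K.AWm R)) ∘ₗ K.AWm R := by
  refine DirectSum.linearMap_ext _ fun v => Finsupp.lhom_ext' fun x => LinearMap.ext_ring ?_
  change (TensorProduct.assoc R _ _ _).toLinearMap
      (TensorProduct.map (K.AWm R) LinearMap.id (K.AWm R (K.gen R v x))) =
    TensorProduct.map LinearMap.id (K.AWm R) (K.AWm R (K.gen R v x))
  rw [K.assoc_map_AWm_id_AWm_gen, K.map_id_AWm_AWm_gen]
  refine Fintype.sum_equiv (awSplitEquiv v) _ _ fun ⟨i, j⟩ => ?_
  have ha : ∀ l, ((awSplitEquiv v ⟨i, j⟩).1 l : ℕ) = j l := fun _ => rfl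
  have hb : ∀ l, ((awSplitEquiv v ⟨i, j⟩).2 l : ℕ) = i l - j l := fun _ => rfl
  rw [awSign_mul_awSign_split, K.gen_front_front ha, K.gen_back_front ha hb,
    K.gen_back_back ha hb]
end
end

section
/- The map tc : Sur(k)^D → WΣ_k, sending an i-simplex s of the diagonal of Sur(k) (a sequence containing each value 1,...,k exactly i+1 times) to the sequence (σ₀,...,σ_i) of permutations, where σ_j is the subsequence of s consisting of the (j+1)-st occurrence of each value, is a well-defined map of simplicial sets (commutes with all faces and degeneracies). -/
/-- `selOcc j s c` extracts from the sequence `s` the subsequence of the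
`(j+1)`-st occurrences of each value, where `c` records how many occurrences of
each value have already been seen.  For `c = 0`, this is the `j`-th permutation
`σ_j` in the Berger–Fresse map `tc`. -/
def selOcc {k : ℕ} (j : ℕ) : List (Fin k) → (Fin k → ℕ) → List (Fin k)
  | [], _ => []
  | x :: xs, c =>
    if c x = j then x :: selOcc j xs (Function.update c x (c x + 1))
    else selOcc j xs (Function.update c x (c x + 1))

/-- `delOcc j s c` deletes from `s` the `(j+1)`-st occurrence of every value:
this is the face `d_j` of the diagonal `Sur(k)^D`. -/
def delOcc {k : ℕ} (j : ℕ) : List (Fin k) → (Fin k → ℕ) → List (Fin k)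
  | [], _ => []
  | x :: xs, c =>
    if c x = j then delOcc j xs (Function.update c x (c x + 1))
    else x :: delOcc j xs (Function.update c x (c x + 1))

/-- `dupOcc j s c` doubles in `s` the `(j+1)`-st occurrence of every value:
this is the degeneracy `s_j` of the diagonal `Sur(k)^D`. -/
def dupOcc {k : ℕ} (j : ℕ) : List (Fin k) → (Fin k → ℕ) → List (Fin k)
  | [], _ => []
  | x :: xs, c =>
    if c x = j then x :: x :: dupOcc j xs (Function.update c x (c x + 1))
    else x :: dupOcc j xs (Function.update c x (c x + 1))

/-!
Annotate every letter of a word with its occurrence index, the number of equal letters before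
it; then `σ_j` is the word of letters annotated `j`. Deleting (doubling) the letters annotated
`j` acts letter by letter on the annotated word: an index `n > j` becomes `n - 1` (`n + 1`), and
a doubled letter is annotated `j, j + 1`. So after a deletion index `m ≥ j` is read off where
index `m + 1` was, after a doubling index `m > j` where index `m - 1` was, and smaller indices
do not move. A word with `i + 1` copies of each letter has exactly one letter annotated `j` for
each `j ≤ i`, so each `σ_j` is a permutation.
-/

theorem List.length_eq_card_of_count_eq_one {α : Type*} [Fintype α] [DecidableEq α] {l : List α}
    (hl : ∀ a, l.count a = 1) : l.length = Fintype.card α := by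
  have hnodup : l.Nodup := List.nodup_iff_count_le_one.mpr fun a => (hl a).le
  have huniv : l.toFinset = Finset.univ := Finset.eq_univ_of_forall fun a =>
    List.mem_toFinset.mpr (List.count_pos_iff.mp (by rw [hl a]; exact Nat.one_pos))
  rw [← List.toFinset_card_of_nodup hnodup, huniv, Finset.card_univ]

namespace SurjectionDiagonal

variable {k : ℕ}

def occurrences : List (Fin k) → (Fin k → ℕ) → List (Fin k × ℕ)
  | [], _ => []
  | x :: xs, c => (x, c x) :: occurrences xs (Function.update c x (c x + 1))

/-- The counter of a letter in `d_j s` as a function of its counter `n` in `s`. -/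
def faceIndex (j n : ℕ) : ℕ := if n ≤ j then n else n - 1

/-- The counter of a letter in `s_j s` as a function of its counter `n` in `s`. -/
def degenIndex (j n : ℕ) : ℕ := if n ≤ j then n else n + 1

lemma faceIndex_succ {j n : ℕ} (h : n ≠ j) : faceIndex j (n + 1) = faceIndex j n + 1 := by
  unfold faceIndex; split_ifs <;> omega

lemma faceIndex_succ_self (j : ℕ) : faceIndex j (j + 1) = faceIndex j j := by
  simp [faceIndex]

lemma degenIndex_succ {j n : ℕ} (h : n ≠ j) : degenIndex j (n + 1) = degenIndex j n + 1 := by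
  unfold degenIndex; split_ifs <;> omega

lemma degenIndex_self (j : ℕ) : degenIndex j j = j := if_pos le_rfl

lemma degenIndex_succ_self (j : ℕ) : degenIndex j (j + 1) = j + 2 := by
  simp [degenIndex]

lemma faceIndex_comp_zero {α : Type*} (j : ℕ) :
    faceIndex j ∘ (fun _ : α => 0) = fun _ => 0 := by
  funext; simp [faceIndex]

lemma degenIndex_comp_zero {α : Type*} (j : ℕ) :
    degenIndex j ∘ (fun _ : α => 0) = fun _ => 0 := by
  funext; simp [degenIndex]

lemma selOcc_eq_flatMap_occurrences (m : ℕ) (s : List (Fin k)) (c : Fin k → ℕ) :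
    selOcc m s c = (occurrences s c).flatMap fun p => if p.2 = m then [p.1] else [] := by
  induction s generalizing c with
  | nil => rfl
  | cons x xs ih => by_cases hx : c x = m <;> simp [selOcc, occurrences, hx, ih]

lemma occurrences_delOcc (j : ℕ) (s : List (Fin k)) (c : Fin k → ℕ) :
    occurrences (delOcc j s c) (faceIndex j ∘ c) =
      (occurrences s c).flatMap fun p => if p.2 = j then [] else [(p.1, faceIndex j p.2)] := by
  induction s generalizing c with
  | nil => rfl
  | cons x xs ih =>
    by_cases hx : c x = j
    · have hcounter : faceIndex j ∘ Function.update c x (c x + 1) = faceIndex j ∘ c := by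
        rw [Function.comp_update, hx, faceIndex_succ_self, ← hx]
        exact Function.update_eq_self x _
      rw [delOcc, if_pos hx, ← hcounter, ih]
      simp [occurrences, hx]
    · rw [delOcc, if_neg hx, occurrences, Function.comp_apply, ← faceIndex_succ hx,
        ← Function.comp_update, ih]
      simp [occurrences, hx]

lemma occurrences_dupOcc (j : ℕ) (s : List (Fin k)) (c : Fin k → ℕ) :
    occurrences (dupOcc j s c) (degenIndex j ∘ c) =
      (occurrences s c).flatMap fun p =>
        if p.2 = j then [(p.1, j), (p.1, j + 1)] else [(p.1, degenIndex j p.2)] := by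
  induction s generalizing c with
  | nil => rfl
  | cons x xs ih =>
    by_cases hx : c x = j
    · have hcounter : Function.update
          (Function.update (degenIndex j ∘ c) x (degenIndex j (c x) + 1)) x
          (degenIndex j (c x) + 1 + 1) = degenIndex j ∘ Function.update c x (c x + 1) := by
        rw [Function.update_idem, Function.comp_update, hx, degenIndex_self, degenIndex_succ_self]
      rw [dupOcc, if_pos hx, occurrences, occurrences, Function.comp_apply, Function.update_self,
        hcounter, ih]
      simp [occurrences, hx, degenIndex_self]
    · rw [dupOcc, if_neg hx, occurrences, Function.comp_apply, ← degenIndex_succ hx,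
        ← Function.comp_update, ih]
      simp [occurrences, hx]

variable {m j : ℕ}

lemma selOcc_delOcc_of_lt (hm : m < j) (s : List (Fin k)) (c : Fin k → ℕ) :
    selOcc m (delOcc j s c) (faceIndex j ∘ c) = selOcc m s c := by
  rw [selOcc_eq_flatMap_occurrences, selOcc_eq_flatMap_occurrences, occurrences_delOcc,
    List.flatMap_assoc]
  refine List.flatMap_congr fun ⟨x, n⟩ _ => ?_
  simp only [faceIndex]
  split_ifs <;> simp_all <;> omega

lemma selOcc_delOcc_of_le (hm : j ≤ m) (s : List (Fin k)) (c : Fin k → ℕ) :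
    selOcc m (delOcc j s c) (faceIndex j ∘ c) = selOcc (m + 1) s c := by
  rw [selOcc_eq_flatMap_occurrences, selOcc_eq_flatMap_occurrences, occurrences_delOcc,
    List.flatMap_assoc]
  refine List.flatMap_congr fun ⟨x, n⟩ _ => ?_
  simp only [faceIndex]
  split_ifs <;> simp_all <;> omega

lemma selOcc_dupOcc_of_le (hm : m ≤ j) (s : List (Fin k)) (c : Fin k → ℕ) :
    selOcc m (dupOcc j s c) (degenIndex j ∘ c) = selOcc m s c := by
  rw [selOcc_eq_flatMap_occurrences, selOcc_eq_flatMap_occurrences, occurrences_dupOcc,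
    List.flatMap_assoc]
  refine List.flatMap_congr fun ⟨x, n⟩ _ => ?_
  simp only [degenIndex]
  split_ifs <;> simp_all <;> omega

lemma selOcc_succ_dupOcc_of_le (hm : j ≤ m) (s : List (Fin k)) (c : Fin k → ℕ) :
    selOcc (m + 1) (dupOcc j s c) (degenIndex j ∘ c) = selOcc m s c := by
  rw [selOcc_eq_flatMap_occurrences, selOcc_eq_flatMap_occurrences, occurrences_dupOcc,
    List.flatMap_assoc]
  refine List.flatMap_congr fun ⟨x, n⟩ _ => ?_
  simp only [degenIndex]
  split_ifs <;> simp_all <;> omega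

lemma selOcc_count (j : ℕ) (s : List (Fin k)) (c : Fin k → ℕ) (l : Fin k) :
    (selOcc j s c).count l = if c l ≤ j ∧ j < c l + s.count l then 1 else 0 := by
  induction s generalizing c with
  | nil => simp only [selOcc, List.count_nil]; exact (if_neg (by omega)).symm
  | cons x xs ih =>
    rcases eq_or_ne l x with rfl | hne
    · by_cases hx : c l = j <;>
        simp only [selOcc, hx, ite_true, ite_false, List.count_cons_self, ih,
          Function.update_self] <;> split_ifs <;> omega
    · by_cases hx : c x = j <;>
        simp [selOcc, hx, List.count_cons_of_ne hne.symm, ih, Function.update_of_ne hne]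

lemma selOcc_count_eq_one {i : ℕ} {s : List (Fin k)} (hs : ∀ l : Fin k, s.count l = i + 1)
    (hj : j ≤ i) (l : Fin k) : (selOcc j s fun _ => 0).count l = 1 := by
  rw [selOcc_count, if_pos ⟨Nat.zero_le _, by rw [hs l]; omega⟩]

end SurjectionDiagonal

open SurjectionDiagonal in
/-- The map `tc : Sur(k)^D → WΣ_k` sending an `i`-simplex `s` of the diagonal of
`Sur(k)` (a sequence containing each value exactly `i+1` times) to the tuple of
permutations `(σ_0, ..., σ_i)`, where `σ_j = selOcc j s 0` is the subsequence of
`(j+1)`-st occurrences, is a well-defined simplicial map: each `σ_j` is a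
permutation word (no duplicates, length `k`), and `tc` commutes with all faces
`d_j` and degeneracies `s_j` (which on the Barratt–Eccles side remove,
respectively double, the `(j+1)`-st permutation). -/
theorem tc_simplicial_map (k i : ℕ) (s : List (Fin k))
    (hs : ∀ l : Fin k, s.count l = i + 1) :
    (∀ j ≤ i, (selOcc j s (fun _ => 0)).Nodup ∧ (selOcc j s (fun _ => 0)).length = k) ∧
    (∀ j ≤ i, ∀ m : ℕ,
      (m < j → selOcc m (delOcc j s (fun _ => 0)) (fun _ => 0) = selOcc m s (fun _ => 0)) ∧
      (j ≤ m → selOcc m (delOcc j s (fun _ => 0)) (fun _ => 0) = selOcc (m + 1) s (fun _ => 0))) ∧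
    (∀ j ≤ i, ∀ m : ℕ,
      (m ≤ j → selOcc m (dupOcc j s (fun _ => 0)) (fun _ => 0) = selOcc m s (fun _ => 0)) ∧
      (j < m → selOcc m (dupOcc j s (fun _ => 0)) (fun _ => 0) = selOcc (m - 1) s (fun _ => 0))) := by
  refine ⟨fun j hj => ?_, fun j _ m => ⟨fun hm => ?_, fun hm => ?_⟩,
    fun j _ m => ⟨fun hm => ?_, fun hm => ?_⟩⟩
  · have hcount := selOcc_count_eq_one hs hj
    exact ⟨List.nodup_iff_count_le_one.mpr fun l => (hcount l).le,
      (List.length_eq_card_of_count_eq_one hcount).trans (Fintype.card_fin k)⟩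
  · simpa only [faceIndex_comp_zero] using selOcc_delOcc_of_lt hm s fun _ => 0
  · simpa only [faceIndex_comp_zero] using selOcc_delOcc_of_le hm s fun _ => 0
  · simpa only [degenIndex_comp_zero] using selOcc_dupOcc_of_le hm s fun _ => 0
  · obtain ⟨m, rfl⟩ : ∃ m', m = m' + 1 := ⟨m - 1, by omega⟩
    simpa only [degenIndex_comp_zero, Nat.add_sub_cancel] using
      selOcc_succ_dupOcc_of_le (Nat.le_of_lt_succ hm) s fun _ => 0
end
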